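/- Let a, b, c, d lie in positive order on the unit circle. Set d1 := 2·artanh(√((|a−b|·|c−d|)/(|a−c|·|b−d|))) and d2 := 2·artanh(√((|a−d|·|b−c|)/(|a−c|·|b−d|))). Then d1·d2 ≤ (2·log(√2 + 1))², with equality if and only if the absolute cross ratio (|a−c|·|b−d|)/(|a−b|·|c−d|) equals 2. -/

import Mathlib

open Complex

/-- Points `a, b, c, d` lie in positive order on the unit circle. -/
def PosOrderOnCircle (a b c d : ℂ) : Prop :=
  ∃ θ₁ θ₂ θ₃ θ₄ : ℝ, θ₁ < θ₂ ∧ θ₂ < θ₃ ∧ θ₃ < θ₄ ∧ θ₄ < θ₁ + 2 * Real.pi ∧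
    a = Complex.exp (θ₁ * Complex.I) ∧ b = Complex.exp (θ₂ * Complex.I) ∧
    c = Complex.exp (θ₃ * Complex.I) ∧ d = Complex.exp (θ₄ * Complex.I)

/-- The inverse hyperbolic tangent. -/
noncomputable def artanh (x : ℝ) : ℝ := Real.log ((1 + x) / (1 - x)) / 2

/-!
By Ptolemy's theorem the ratios `r = |a-b||c-d| / (|a-c||b-d|)` and
`s = |a-d||b-c| / (|a-c||b-d|)` are positive with `r + s = 1`, so `u = artanh √r` and
`v = artanh √s` satisfy `sinh u * sinh v = 1`. In the coordinates `x = log u`, `y = log v` this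
constraint reads `φ x + φ y = 0` for `φ = log ∘ sinh ∘ exp`, which is strictly increasing and
strictly convex (its derivative is `t coth t` at `t = exp x`). Hence `x + y ≤ 2 log (arsinh 1)`,
i.e. `u v ≤ arsinh 1 ^ 2 = log (√2 + 1) ^ 2`, with equality iff `u = v`, i.e. iff `r = s = 1/2`.
-/

open scoped Real

theorem norm_exp_mul_I_sub_exp_mul_I (θ ψ : ℝ) :
    ‖exp (θ * I) - exp (ψ * I)‖ = 2 * |Real.sin ((ψ - θ) / 2)| := by
  have : exp (θ * I) - exp (ψ * I) = -(exp (θ * I) * (exp (I * ↑(ψ - θ)) - 1)) := by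
    rw [mul_sub, ← Complex.exp_add]; push_cast; ring_nf
  rw [this, norm_neg, norm_mul, norm_exp_ofReal_mul_I, one_mul,
    norm_exp_I_mul_ofReal_sub_one, norm_mul, Real.norm_two, Real.norm_eq_abs]

theorem norm_exp_mul_I_sub_exp_mul_I_of_lt {θ ψ : ℝ} (h : θ < ψ) (h' : ψ < θ + 2 * π) :
    ‖exp (θ * I) - exp (ψ * I)‖ = 2 * Real.sin ((ψ - θ) / 2) := by
  rw [norm_exp_mul_I_sub_exp_mul_I, abs_of_nonneg]
  exact Real.sin_nonneg_of_nonneg_of_le_pi (by linarith) (by linarith)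

theorem Real.sin_add_mul_sin_add (x y z : ℝ) :
    Real.sin (x + y) * Real.sin (y + z) =
      Real.sin x * Real.sin z + Real.sin (x + y + z) * Real.sin y := by
  simp only [Real.sin_add, Real.cos_add]
  linear_combination Real.sin x * Real.sin z * Real.sin_sq_add_cos_sq y

namespace PosOrderOnCircle

variable {a b c d : ℂ}

theorem exists_half_angles (h : PosOrderOnCircle a b c d) :
    ∃ x y z : ℝ, 0 < x ∧ 0 < y ∧ 0 < z ∧ x + y + z < π ∧
      ‖a - b‖ = 2 * Real.sin x ∧ ‖b - c‖ = 2 * Real.sin y ∧ ‖c - d‖ = 2 * Real.sin z ∧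
      ‖a - c‖ = 2 * Real.sin (x + y) ∧ ‖b - d‖ = 2 * Real.sin (y + z) ∧
      ‖a - d‖ = 2 * Real.sin (x + y + z) := by
  obtain ⟨θ₁, θ₂, θ₃, θ₄, h₁₂, h₂₃, h₃₄, h₄₁, rfl, rfl, rfl, rfl⟩ := h
  refine ⟨(θ₂ - θ₁) / 2, (θ₃ - θ₂) / 2, (θ₄ - θ₃) / 2, by linarith, by linarith, by linarith,
    by linarith, ?_, ?_, ?_, ?_, ?_, ?_⟩ <;>
  rw [norm_exp_mul_I_sub_exp_mul_I_of_lt (by linarith) (by linarith)] <;> ring_nf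

theorem ptolemy (h : PosOrderOnCircle a b c d) :
    ‖a - b‖ * ‖c - d‖ + ‖a - d‖ * ‖b - c‖ = ‖a - c‖ * ‖b - d‖ := by
  obtain ⟨x, y, z, -, -, -, -, hab, hbc, hcd, hac, hbd, had⟩ := h.exists_half_angles
  rw [hab, hbc, hcd, hac, hbd, had]
  linear_combination -4 * Real.sin_add_mul_sin_add x y z

theorem mul_norm_sub_pos (h : PosOrderOnCircle a b c d) :
    0 < ‖a - b‖ * ‖c - d‖ ∧ 0 < ‖a - d‖ * ‖b - c‖ := by
  obtain ⟨x, y, z, hx, hy, hz, hxyz, hab, hbc, hcd, -, -, had⟩ := h.exists_half_angles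
  have hsin : ∀ t, 0 < t → t < π → 0 < 2 * Real.sin t := fun t h0 hπ ↦
    mul_pos two_pos (Real.sin_pos_of_pos_of_lt_pi h0 hπ)
  rw [hab, hbc, hcd, had]
  exact ⟨mul_pos (hsin x hx (by linarith)) (hsin z hz (by linarith)),
    mul_pos (hsin _ (by linarith) hxyz) (hsin y hy (by linarith))⟩

end PosOrderOnCircle

theorem strictMonoOn_mul_cosh_div_sinh :
    StrictMonoOn (fun t ↦ t * Real.cosh t / Real.sinh t) (Set.Ioi 0) := by
  refine strictMonoOn_of_deriv_pos (convex_Ioi 0) ?_ fun t ht ↦ ?_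
  · exact ContinuousOn.div (by fun_prop) (by fun_prop) fun t ht ↦
      (Real.sinh_pos_iff.2 ht).ne'
  rw [interior_Ioi] at ht
  have hsinh : 0 < Real.sinh t := Real.sinh_pos_iff.2 ht
  have hderiv : HasDerivAt (fun t ↦ t * Real.cosh t / Real.sinh t)
      ((Real.cosh t * Real.sinh t - t) / Real.sinh t ^ 2) t := by
    refine (((hasDerivAt_id' t).mul (Real.hasDerivAt_cosh t)).div (Real.hasDerivAt_sinh t)
      hsinh.ne').congr_deriv ?_
    simp only [Pi.mul_apply, one_mul]
    congr 1
    linear_combination (-t) * Real.cosh_sq t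
  rw [hderiv.deriv]
  -- `t < sinh t ≤ sinh t * cosh t`
  have := Real.self_lt_sinh_iff.2 ht
  have := Real.one_le_cosh t
  exact div_pos (by nlinarith) (by positivity)

theorem hasDerivAt_log_sinh_exp (x : ℝ) :
    HasDerivAt (fun x ↦ Real.log (Real.sinh (Real.exp x)))
      (Real.exp x * Real.cosh (Real.exp x) / Real.sinh (Real.exp x)) x := by
  convert ((Real.hasDerivAt_exp x).sinh).log (Real.sinh_pos_iff.2 (Real.exp_pos x)).ne' using 1
  ring

theorem strictConvexOn_log_sinh_exp :
    StrictConvexOn ℝ Set.univ (fun x ↦ Real.log (Real.sinh (Real.exp x))) := by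
  refine StrictMono.strictConvexOn_univ_of_deriv
    (continuous_iff_continuousAt.2 fun x ↦ (hasDerivAt_log_sinh_exp x).continuousAt) ?_
  rw [funext fun x ↦ (hasDerivAt_log_sinh_exp x).deriv]
  exact fun _ _ hxy ↦ strictMonoOn_mul_cosh_div_sinh (Real.exp_pos _) (Real.exp_pos _)
    (Real.exp_lt_exp.2 hxy)

theorem strictMono_log_sinh_exp : StrictMono (fun x ↦ Real.log (Real.sinh (Real.exp x))) :=
  fun x _ hxy ↦ Real.log_lt_log (Real.sinh_pos_iff.2 (Real.exp_pos x))
    (Real.sinh_lt_sinh.2 (Real.exp_lt_exp.2 hxy))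

theorem StrictConvexOn.add_le_two_mul_of_add_eq {f : ℝ → ℝ} (hf : StrictConvexOn ℝ Set.univ f)
    (hmono : StrictMono f) {x y z : ℝ} (h : f x + f y = 2 * f z) :
    x + y ≤ 2 * z ∧ (x + y = 2 * z ↔ x = y) := by
  have hmid : f ((x + y) / 2) ≤ f z := by
    have := hf.convexOn.2 (Set.mem_univ x) (Set.mem_univ y) (by norm_num : (0 : ℝ) ≤ 1 / 2)
      (by norm_num : (0 : ℝ) ≤ 1 / 2) (by norm_num)
    simp only [smul_eq_mul] at this
    rw [show (x + y) / 2 = 1 / 2 * x + 1 / 2 * y by ring]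
    linarith
  refine ⟨by linarith [hmono.le_iff_le.1 hmid], fun hxy ↦ ?_, fun hxy ↦ ?_⟩
  · by_contra hne
    have := hf.2 (Set.mem_univ x) (Set.mem_univ y) hne (by norm_num : (0 : ℝ) < 1 / 2)
      (by norm_num : (0 : ℝ) < 1 / 2) (by norm_num)
    simp only [smul_eq_mul] at this
    rw [show 1 / 2 * x + 1 / 2 * y = z by linarith] at this
    linarith
  · subst hxy
    rw [hmono.injective (by linarith : f x = f z)]
    ring

theorem Real.arsinh_one : Real.arsinh 1 = Real.log (√2 + 1) := by
  rw [Real.arsinh]; norm_num [add_comm]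

theorem mul_le_arsinh_one_sq_of_sinh_mul_sinh_eq_one {u v : ℝ} (hu : 0 < u) (hv : 0 < v)
    (h : Real.sinh u * Real.sinh v = 1) :
    u * v ≤ Real.arsinh 1 ^ 2 ∧ (u * v = Real.arsinh 1 ^ 2 ↔ u = v) := by
  have hc : 0 < Real.arsinh 1 := Real.arsinh_pos_iff.2 one_pos
  have hφ : ∀ t, 0 < t → Real.log (Real.sinh (Real.exp (Real.log t))) = Real.log (Real.sinh t) :=
    fun t ht ↦ by rw [Real.exp_log ht]
  have hsum : Real.log (Real.sinh (Real.exp (Real.log u))) +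
      Real.log (Real.sinh (Real.exp (Real.log v))) =
      2 * Real.log (Real.sinh (Real.exp (Real.log (Real.arsinh 1)))) := by
    rw [hφ u hu, hφ v hv, hφ _ hc, Real.sinh_arsinh, ← Real.log_mul
      (Real.sinh_pos_iff.2 hu).ne' (Real.sinh_pos_iff.2 hv).ne', h, Real.log_one, mul_zero]
  obtain ⟨hle, heq⟩ :=
    strictConvexOn_log_sinh_exp.add_le_two_mul_of_add_eq strictMono_log_sinh_exp hsum
  have hexp : ∀ s t, 0 < s → 0 < t →
      Real.exp (Real.log s + Real.log t) = s * t := fun s t hs ht ↦ by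
    rw [Real.exp_add, Real.exp_log hs, Real.exp_log ht]
  rw [← hexp u v hu hv, sq, ← hexp _ _ hc hc, Real.exp_le_exp, Real.exp_eq_exp, ← two_mul,
    ← Real.log_injOn_pos.eq_iff hu hv]
  exact ⟨hle, heq⟩

theorem artanh_eq_real_artanh {x : ℝ} (hx : x ∈ Set.Icc (-1) 1) : artanh x = Real.artanh x := by
  rw [Real.artanh_eq_half_log hx, artanh]
  ring

theorem Real.sinh_artanh_sqrt {t : ℝ} (h0 : 0 ≤ t) (h1 : t < 1) :
    Real.sinh (Real.artanh √t) = √t / √(1 - t) := by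
  rw [Real.sinh_artanh ⟨by linarith [Real.sqrt_nonneg t], (Real.sqrt_lt' one_pos).2 (by simpa)⟩,
    Real.sq_sqrt h0]

theorem artanh_sqrt_mul_artanh_sqrt_le {r s : ℝ} (hr : 0 < r) (hs : 0 < s) (hrs : r + s = 1) :
    2 * artanh √r * (2 * artanh √s) ≤ (2 * Real.log (√2 + 1)) ^ 2 ∧
      (2 * artanh √r * (2 * artanh √s) = (2 * Real.log (√2 + 1)) ^ 2 ↔ r = s) := by
  have hmem : ∀ t, 0 < t → t < 1 → √t ∈ Set.Ioo 0 1 := fun t h0 h1 ↦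
    ⟨Real.sqrt_pos.2 h0, (Real.sqrt_lt' one_pos).2 (by simpa)⟩
  have hr1 := hmem r hr (by linarith)
  have hs1 := hmem s hs (by linarith)
  have hr1' : √r ∈ Set.Ioo (-1) 1 := Set.Ioo_subset_Ioo_left (by norm_num) hr1
  have hs1' : √s ∈ Set.Ioo (-1) 1 := Set.Ioo_subset_Ioo_left (by norm_num) hs1
  have hprod : Real.sinh (Real.artanh √r) * Real.sinh (Real.artanh √s) = 1 := by
    rw [Real.sinh_artanh_sqrt hr.le (by linarith), Real.sinh_artanh_sqrt hs.le (by linarith),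
      show 1 - r = s by linarith, show 1 - s = r by linarith, div_mul_div_comm, mul_comm √s,
      div_self (mul_pos hr1.1 hs1.1).ne']
  obtain ⟨hle, heq⟩ := mul_le_arsinh_one_sq_of_sinh_mul_sinh_eq_one
    (Real.artanh_pos hr1) (Real.artanh_pos hs1) hprod
  rw [artanh_eq_real_artanh (Set.Ioo_subset_Icc_self hr1'),
    artanh_eq_real_artanh (Set.Ioo_subset_Icc_self hs1'), ← Real.arsinh_one, mul_pow,
    mul_mul_mul_comm, show (2 : ℝ) ^ 2 = 2 * 2 by norm_num]
  refine ⟨by nlinarith, ?_⟩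
  rw [mul_right_inj' (by norm_num), heq, Real.artanh_injOn.eq_iff hr1' hs1',
    Real.sqrt_inj hr.le hs.le]

theorem product_of_distances_le (a b c d : ℂ)
    (hord : PosOrderOnCircle a b c d) :
    let d1 := 2 * artanh (Real.sqrt
      ((‖a - b‖ * ‖c - d‖) /
        (‖a - c‖ * ‖b - d‖)))
    let d2 := 2 * artanh (Real.sqrt
      ((‖a - d‖ * ‖b - c‖) /
        (‖a - c‖ * ‖b - d‖)))
    d1 * d2 ≤ (2 * Real.log (Real.sqrt 2 + 1)) ^ 2 ∧
    (d1 * d2 = (2 * Real.log (Real.sqrt 2 + 1)) ^ 2 ↔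
      (‖a - c‖ * ‖b - d‖) /
        (‖a - b‖ * ‖c - d‖) = 2) := by
  intro d1 d2
  obtain ⟨hB, hC⟩ := hord.mul_norm_sub_pos
  have hA : 0 < ‖a - c‖ * ‖b - d‖ := hord.ptolemy ▸ add_pos hB hC
  have hsum : ‖a - b‖ * ‖c - d‖ / (‖a - c‖ * ‖b - d‖) + ‖a - d‖ * ‖b - c‖ / (‖a - c‖ * ‖b - d‖)
      = 1 := by
    rw [← add_div, hord.ptolemy, div_self hA.ne']
  obtain ⟨hle, heq⟩ := artanh_sqrt_mul_artanh_sqrt_le (div_pos hB hA) (div_pos hC hA) hsum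
  refine ⟨hle, heq.trans ?_⟩
  rw [div_left_inj' hA.ne', div_eq_iff hB.ne', ← hord.ptolemy]
  constructor <;> intro h <;> linarith
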